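/- Assume r ≥ 1. For every positive semidefinite complex matrix σ indexed by (Fin s → Fin 4) with trace σ = 1 (a density matrix), the real part of trace(Π * (|0^r⟩⟨0^r| ⊗ σ)) is at most 1/2. (Second case of the mixed-answer lemma: if the provers answer qudits in which at least one share of the GHZ-like state is replaced by |0⟩, the answered state projects onto the correct codespace with probability at most one half.) -/

import Mathlib

/-!
Of the eight outer products making up `Π`, only `|0^r, 0^s⟩⟨0^r, 0^s|` meets
`|0^r⟩⟨0^r| ⊗ σ`: since `r ≥ 1`, distinct `u` give distinct constant functions on the first
block. Hence the trace equals `σ(0^s, 0^s) / 2`, and a diagonal entry of a positive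
semidefinite matrix is bounded by its trace, which is `1`.
-/

open Matrix Kronecker
open scoped ComplexOrder

/-- Standard basis vector of a single block of `q` qudits, supported at the
constant function `fun _ => u`. -/
def basisVec (q : ℕ) (u : Fin 4) : (Fin q → Fin 4) → ℂ :=
  fun x => if x = (fun _ => u) then 1 else 0

/-- Standard basis vector `|u^r, v^s⟩` of the two-block system, supported at
the pair of constant functions. -/
def basisVec2 (r s : ℕ) (u v : Fin 4) : ((Fin r → Fin 4) × (Fin s → Fin 4)) → ℂ :=
  fun x => if x = ((fun _ => u), (fun _ => v)) then 1 else 0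

/-- The codespace projector `Π` on all `r + s` qudits. -/
noncomputable def codeProj2 (r s : ℕ) :
    Matrix ((Fin r → Fin 4) × (Fin s → Fin 4)) ((Fin r → Fin 4) × (Fin s → Fin 4)) ℂ :=
  (1/2 : ℂ) •
    ((∑ u ∈ ({0,1} : Finset (Fin 4)), ∑ v ∈ ({0,1} : Finset (Fin 4)),
        vecMulVec (basisVec2 r s u u) (star (basisVec2 r s v v)))
      + (∑ u ∈ ({2,3} : Finset (Fin 4)), ∑ v ∈ ({2,3} : Finset (Fin 4)),
        vecMulVec (basisVec2 r s u u) (star (basisVec2 r s v v))))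

lemma Matrix.vecMulVec_single_star_single {n R : Type*} [DecidableEq n] [Semiring R]
    [StarRing R] (i j : n) :
    vecMulVec (Pi.single i (1 : R)) (star (Pi.single j 1)) = single i j 1 := by
  rw [← Pi.single_star, star_one, single_eq_single_vecMulVec_single]

lemma Matrix.PosSemidef.diag_le_trace {n R : Type*} [Fintype n] [Ring R] [PartialOrder R]
    [StarRing R] [IsOrderedAddMonoid R] {A : Matrix n n R} (hA : A.PosSemidef) (i : n) :
    A i i ≤ A.trace :=
  Finset.single_le_sum (f := fun j => A j j) (fun _ _ => hA.diag_nonneg) (Finset.mem_univ i)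

lemma basisVec_eq_single (q : ℕ) (u : Fin 4) :
    basisVec q u = Pi.single (fun _ => u) 1 := by
  ext x
  simp [basisVec, Pi.single_apply]

lemma basisVec2_eq_single (r s : ℕ) (u v : Fin 4) :
    basisVec2 r s u v = Pi.single ((fun _ => u), (fun _ => v)) 1 := by
  ext x
  simp [basisVec2, Pi.single_apply]

lemma trace_codeProj2_mul (r s : ℕ)
    (M : Matrix ((Fin r → Fin 4) × (Fin s → Fin 4)) ((Fin r → Fin 4) × (Fin s → Fin 4)) ℂ) :
    (codeProj2 r s * M).trace = (1/2 : ℂ) *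
      ((∑ u ∈ ({0,1} : Finset (Fin 4)), ∑ v ∈ ({0,1} : Finset (Fin 4)),
          M ((fun _ => v), (fun _ => v)) ((fun _ => u), (fun _ => u)))
        + ∑ u ∈ ({2,3} : Finset (Fin 4)), ∑ v ∈ ({2,3} : Finset (Fin 4)),
          M ((fun _ => v), (fun _ => v)) ((fun _ => u), (fun _ => u))) := by
  simp only [codeProj2, basisVec2_eq_single, vecMulVec_single_star_single, smul_mul, add_mul,
    Matrix.sum_mul, trace_smul, trace_add, trace_sum, trace_single_mul, smul_eq_mul, one_mul]

lemma kronecker_basisVec_outer_apply_const {r s : ℕ} (hr : 1 ≤ r)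
    (σ : Matrix (Fin s → Fin 4) (Fin s → Fin 4) ℂ) (u v : Fin 4) :
    (vecMulVec (basisVec r 0) (star (basisVec r 0)) ⊗ₖ σ)
        ((fun _ => v), (fun _ => v)) ((fun _ => u), (fun _ => u))
      = if v = 0 ∧ u = 0 then σ (fun _ => 0) (fun _ => 0) else 0 := by
  have : Nonempty (Fin r) := Fin.pos_iff_nonempty.mp hr
  rw [basisVec_eq_single, vecMulVec_single_star_single, kronecker_apply, single_apply]
  simp only [funext_iff, forall_const]
  split_ifs <;> simp_all [eq_comm]

theorem mixed_answer_projects_at_most_half (r s : ℕ) (hr : 1 ≤ r)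
    (σ : Matrix (Fin s → Fin 4) (Fin s → Fin 4) ℂ)
    (hσ : σ.PosSemidef) (htr : σ.trace = 1) :
    ((codeProj2 r s * (vecMulVec (basisVec r 0) (star (basisVec r 0)) ⊗ₖ σ)).trace).re
      ≤ 1/2 := by
  have htrace : (codeProj2 r s * (vecMulVec (basisVec r 0) (star (basisVec r 0)) ⊗ₖ σ)).trace
      = (1/2 : ℂ) * σ (fun _ => 0) (fun _ => 0) := by
    simp only [trace_codeProj2_mul, kronecker_basisVec_outer_apply_const hr]
    simp
  have hle : (1/2 : ℂ) * σ (fun _ => 0) (fun _ => 0) ≤ 1/2 :=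
    calc (1/2 : ℂ) * σ (fun _ => 0) (fun _ => 0) ≤ (1/2) * σ.trace :=
          mul_le_mul_of_nonneg_left (hσ.diag_le_trace _) (by norm_num [Complex.le_def])
      _ = 1/2 := by rw [htr, mul_one]
  rw [htrace]
  simpa using (Complex.le_def.mp hle).1
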